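/- arXiv:0910.1795 — 2 statements merged into one kernel-verified Lean document; each statement's English description precedes it below -/
import Mathlib

section
/- For every complex number a with Im(a) > 0, ∫_{-∞}^{∞} e^{-t²}/(t - a) dt = iπ·e^{-a²}·erfc(-ia), where erfc(z) = (2/√π)·∫_z^∞ e^{-t²} dt (the integral taken along any path from z to +∞ eventually along the real axis). -/
/-!
Since `Im a > 0`, `1 / (t - a) = i ∫_0^∞ e^{i(a - t)s} ds`. Swapping the integrals, the
Fourier transform of the Gaussian turns the left side into `i√π ∫_0^∞ e^{ias - s²/4} ds`.
Substituting `s = 2u` and completing the square gives `2 e^{-a²} ∫_0^∞ e^{-(u - ia)²} du`, and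
shifting this half-line Gaussian integral back to the real axis produces `(√π / 2) erfc(-ia)`.
-/

open Complex MeasureTheory

/-- The complementary error function, `erfc z = 1 - (2/√π)∫_0^z e^{-w²} dw`,
with the path integral from `0` to `z` parametrized along the segment. -/
noncomputable def erfc (z : ℂ) : ℂ :=
  1 - (2 / Real.sqrt Real.pi : ℝ) *
    ∫ t in (0 : ℝ)..1, z * Complex.exp (-((t : ℂ) * z) ^ 2)

open Set Filter Topology
open scoped Real

lemma norm_cexp_neg_sq_add_le {w : ℂ} {R : ℝ} (hw : ‖w‖ ≤ R) (u : ℝ) :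
    ‖cexp (-(u + w) ^ 2)‖ ≤ rexp (R ^ 2) * rexp (-(1 / 2) * u ^ 2) := by
  rw [norm_exp, ← Real.exp_add, Real.exp_le_exp]
  have hw2 : w.re ^ 2 + w.im ^ 2 ≤ R ^ 2 := by
    have := pow_le_pow_left₀ (norm_nonneg w) hw 2
    rwa [Complex.sq_norm, normSq_apply, ← sq, ← sq] at this
  -- `2 (u + w.re)² + 2 w.re² - u² = (u + 2 w.re)²`
  simp only [neg_re, sq, add_re, add_im, ofReal_re, ofReal_im, mul_re]
  nlinarith [sq_nonneg (u + 2 * w.re)]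

lemma norm_add_mul_cexp_neg_sq_add_le {w : ℂ} {R : ℝ} (hw : ‖w‖ ≤ R) (u : ℝ) :
    ‖(u + w) * cexp (-(u + w) ^ 2)‖ ≤
      rexp (R ^ 2) * ((|u| + R) * rexp (-(1 / 2) * u ^ 2)) := by
  have hnorm : ‖(u : ℂ) + w‖ ≤ |u| + R :=
    (norm_add_le _ _).trans (by rw [norm_real, Real.norm_eq_abs]; linarith)
  calc ‖(u + w) * cexp (-(u + w) ^ 2)‖
      ≤ (|u| + R) * (rexp (R ^ 2) * rexp (-(1 / 2) * u ^ 2)) := by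
        rw [norm_mul]
        exact mul_le_mul hnorm (norm_cexp_neg_sq_add_le hw u) (norm_nonneg _)
          ((norm_nonneg _).trans hnorm)
    _ = _ := by ring

lemma integrable_abs_add_mul_exp_neg_mul_sq {b : ℝ} (hb : 0 < b) (R : ℝ) :
    Integrable fun u : ℝ => (|u| + R) * rexp (-b * u ^ 2) := by
  simpa only [add_mul, Pi.add_def, norm_mul, Real.norm_eq_abs, Real.abs_exp] using
    (integrable_mul_exp_neg_mul_sq hb).norm.add ((integrable_exp_neg_mul_sq hb).const_mul R)

lemma integrable_add_mul_cexp_neg_sq_add (w : ℂ) :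
    Integrable fun u : ℝ => (u + w) * cexp (-(u + w) ^ 2) :=
  (((integrable_abs_add_mul_exp_neg_mul_sq one_half_pos ‖w‖).const_mul _).mono'
    (by fun_prop) (.of_forall (norm_add_mul_cexp_neg_sq_add_le le_rfl)))

lemma integrable_cexp_neg_sq_add (w : ℂ) :
    Integrable fun u : ℝ => cexp (-(u + w) ^ 2) :=
  (((integrable_exp_neg_mul_sq one_half_pos).const_mul _).mono'
    (by fun_prop) (.of_forall (norm_cexp_neg_sq_add_le le_rfl)))

lemma integrable_cexp_neg_sq : Integrable fun u : ℝ => cexp (-(u : ℂ) ^ 2) := by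
  simpa using integrable_cexp_neg_sq_add 0

lemma tendsto_cexp_neg_sq_add_atTop (w : ℂ) :
    Tendsto (fun u : ℝ => cexp (-(u + w) ^ 2)) atTop (𝓝 0) := by
  refine squeeze_zero_norm (norm_cexp_neg_sq_add_le le_rfl) ?_
  have hdecay : Tendsto (fun u : ℝ => rexp (-(1 / 2) * u ^ 2)) atTop (𝓝 0) :=
    Real.tendsto_exp_atBot.comp <|
      (tendsto_pow_atTop two_ne_zero).const_mul_atTop_of_neg (by norm_num)
  simpa using hdecay.const_mul (rexp (‖w‖ ^ 2))

lemma hasDerivAt_cexp_neg_sq (z : ℂ) :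
    HasDerivAt (fun z => cexp (-z ^ 2)) (-2 * (z * cexp (-z ^ 2))) z :=
  (hasDerivAt_pow 2 z).fun_neg.cexp.congr_deriv (by simp; ring)

lemma integral_Ioi_add_mul_cexp_neg_sq_add (w : ℂ) :
    ∫ u in Ioi (0 : ℝ), (u + w) * cexp (-(u + w) ^ 2) = cexp (-w ^ 2) / 2 := by
  have hderiv (u : ℝ) : HasDerivAt (fun u : ℝ => -cexp (-(u + w) ^ 2) / 2)
      ((u + w) * cexp (-(u + w) ^ 2)) u := by
    have hshift : HasDerivAt (fun u : ℝ => (u : ℂ) + w) 1 u :=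
      (hasDerivAt_id u).ofReal_comp.add_const w
    exact ((hasDerivAt_cexp_neg_sq _).comp u hshift).neg.div_const 2 |>.congr_deriv (by ring)
  rw [integral_Ioi_of_hasDerivAt_of_tendsto' (fun u _ => hderiv u)
    (integrable_add_mul_cexp_neg_sq_add w).integrableOn
    (by simpa using ((tendsto_cexp_neg_sq_add_atTop w).neg.div_const (2 : ℂ)))]
  simp [neg_div]

lemma ofReal_cpow_one_half {x : ℝ} (hx : 0 ≤ x) : (x : ℂ) ^ (1 / 2 : ℂ) = √x := by
  rw [Real.sqrt_eq_rpow, ofReal_cpow hx, ofReal_div, ofReal_one, ofReal_ofNat]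

lemma integral_Ioi_cexp_neg_sq : ∫ u in Ioi (0 : ℝ), cexp (-(u : ℂ) ^ 2) = √π / 2 := by
  convert integral_gaussian_complex_Ioi (b := 1) (by simp) using 1
  · simp
  · rw [div_one, ofReal_cpow_one_half Real.pi_pos.le]

lemma cexp_neg_sq_sub_cexp_neg_sq_add (z c : ℂ) :
    cexp (-z ^ 2) - cexp (-(z + c) ^ 2) =
      2 * c * ∫ t in (0 : ℝ)..1, (z + t * c) * cexp (-(z + t * c) ^ 2) := by
  have hftc := intervalIntegral.integral_unitInterval_deriv_eq_sub (z₀ := z) (z₁ := c)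
    (f := fun z => cexp (-z ^ 2)) (f' := fun z => -2 * (z * cexp (-z ^ 2))) (by fun_prop)
    (fun _ _ => hasDerivAt_cexp_neg_sq _)
  simp only [real_smul, smul_eq_mul, intervalIntegral.integral_const_mul] at hftc
  linear_combination hftc

lemma integrable_add_mul_cexp_neg_sq_add_mul_prod (c : ℂ) :
    Integrable (fun p : ℝ × ℝ => (p.1 + p.2 * c) * cexp (-(p.1 + p.2 * c) ^ 2))
      ((volume.restrict (Ioi 0)).prod (volume.restrict (Ioc 0 1))) := by
  have hmajorant : IntegrableOn
      (fun u : ℝ => rexp (‖c‖ ^ 2) * ((|u| + ‖c‖) * rexp (-(1 / 2) * u ^ 2))) (Ioi 0) :=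
    ((integrable_abs_add_mul_exp_neg_mul_sq one_half_pos ‖c‖).const_mul _).restrict
  have hone : IntegrableOn (fun _ : ℝ => (1 : ℝ)) (Ioc 0 1) :=
    integrableOn_const measure_Ioc_lt_top.ne
  refine (hmajorant.mul_prod hone).mono' (by fun_prop) ?_
  rw [Measure.prod_restrict, ae_restrict_iff' (measurableSet_Ioi.prod measurableSet_Ioc)]
  refine .of_forall fun p hp => ?_
  have ht : ‖(p.2 : ℂ) * c‖ ≤ ‖c‖ := by
    rw [norm_mul, norm_real, Real.norm_eq_abs, abs_of_pos hp.2.1]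
    exact mul_le_of_le_one_left (norm_nonneg c) hp.2.2
  simpa using norm_add_mul_cexp_neg_sq_add_le ht p.1

/-- Integrating `e^{-u²} - e^{-(u+c)²} = 2c ∫_0^1 (u + tc) e^{-(u+tc)²} dt` over `u > 0` and
swapping the integrals moves the ray `c + [0, ∞)` onto `[0, ∞)` at the cost of the segment
`[0, c]`. -/
theorem integral_Ioi_cexp_neg_sq_add (c : ℂ) :
    ∫ u in Ioi (0 : ℝ), cexp (-(u + c) ^ 2) = √π / 2 * erfc c := by
  have hdiff : ∫ u in Ioi (0 : ℝ), (cexp (-(u : ℂ) ^ 2) - cexp (-(u + c) ^ 2)) =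
      ∫ t in (0 : ℝ)..1, c * cexp (-(t * c) ^ 2) := by
    simp_rw [cexp_neg_sq_sub_cexp_neg_sq_add, intervalIntegral.integral_of_le zero_le_one]
    rw [integral_const_mul,
      integral_integral_swap (integrable_add_mul_cexp_neg_sq_add_mul_prod c)]
    simp only [integral_Ioi_add_mul_cexp_neg_sq_add, integral_div, integral_const_mul]
    ring
  rw [integral_sub integrable_cexp_neg_sq.integrableOn
    (integrable_cexp_neg_sq_add c).integrableOn, integral_Ioi_cexp_neg_sq] at hdiff
  have hpi : (√π : ℂ) ≠ 0 := ofReal_ne_zero.2 (Real.sqrt_pos.2 Real.pi_pos).ne'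
  rw [erfc, ← hdiff]
  push_cast
  field_simp
  ring

lemma integral_Ioi_cexp_I_mul_sub_sq_div_four (a : ℂ) :
    ∫ s in Ioi (0 : ℝ), cexp (I * a * s - s ^ 2 / 4) =
      √π * cexp (-a ^ 2) * erfc (-I * a) := by
  have hsquare (s : ℝ) : cexp (I * a * s - s ^ 2 / 4) =
      cexp (-a ^ 2) * cexp (-(((1 / 2 * s : ℝ) : ℂ) + -I * a) ^ 2) := by
    rw [← exp_add]
    congr 1
    push_cast
    ring_nf
    rw [I_sq]
    ring
  simp_rw [hsquare, integral_const_mul]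
  rw [integral_comp_mul_left_Ioi (fun u : ℝ => cexp (-((u : ℂ) + -I * a) ^ 2)) 0 one_half_pos,
    mul_zero, integral_Ioi_cexp_neg_sq_add]
  simp only [one_div, inv_inv, real_smul]
  push_cast
  ring

lemma integral_Ioi_cexp_I_mul {w : ℂ} (hw : 0 < w.im) :
    ∫ s in Ioi (0 : ℝ), cexp (I * w * s) = I / w := by
  have hw0 : w ≠ 0 := fun h => by simp [h] at hw
  rw [integral_exp_mul_complex_Ioi (by simpa using hw) 0]
  field_simp
  simp

lemma integral_cexp_neg_sq_mul_cexp_I_mul (w : ℂ) (s : ℝ) :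
    ∫ t : ℝ, cexp (-(t : ℂ) ^ 2) * cexp (I * (w - t) * s) =
      √π * cexp (I * w * s - s ^ 2 / 4) := by
  have hsplit (t : ℝ) : cexp (-(t : ℂ) ^ 2) * cexp (I * (w - t) * s) =
      cexp (I * w * s) * (cexp (I * ↑(-s) * t) * cexp (-1 * (t : ℂ) ^ 2)) := by
    simp only [← exp_add]
    push_cast
    ring_nf
  simp_rw [hsplit, integral_const_mul]
  rw [fourierIntegral_gaussian (by simp), div_one, ofReal_cpow_one_half Real.pi_pos.le,
    mul_left_comm, ← exp_add]
  push_cast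
  ring_nf

lemma integrable_cexp_neg_sq_mul_cexp_I_mul_prod {a : ℂ} (ha : 0 < a.im) :
    Integrable (fun p : ℝ × ℝ => cexp (-(p.1 : ℂ) ^ 2) * cexp (I * (a - p.1) * p.2))
      (volume.prod (volume.restrict (Ioi 0))) := by
  refine (integrable_cexp_neg_sq.norm.mul_prod (exp_neg_integrableOn_Ioi 0 ha)).mono'
    (by fun_prop) (.of_forall fun p => le_of_eq ?_)
  rw [norm_mul, norm_exp (I * _ * _)]
  simp

/-- For `Im a > 0`, `∫_ℝ e^{-t²}/(t - a) dt = iπ e^{-a²} erfc(-ia)`. -/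
theorem integral_gaussian_pole (a : ℂ) (ha : 0 < a.im) :
    (∫ t : ℝ, Complex.exp (-(t : ℂ) ^ 2) / ((t : ℂ) - a)) =
      Complex.I * Real.pi * Complex.exp (-a ^ 2) * erfc (-Complex.I * a) := by
  have hpole (t : ℝ) : cexp (-t ^ 2) / (t - a) =
      I * ∫ s in Ioi (0 : ℝ), cexp (-t ^ 2) * cexp (I * (a - t) * s) := by
    rw [integral_const_mul, integral_Ioi_cexp_I_mul (by simpa using ha), ← neg_sub a,
      div_neg]
    linear_combination -cexp (-t ^ 2) / (a - t) * I_sq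
  have hpi : (√π : ℂ) * √π = π := by rw [← ofReal_mul, Real.mul_self_sqrt Real.pi_pos.le]
  calc ∫ t : ℝ, cexp (-t ^ 2) / (t - a)
      = I * ∫ t : ℝ, ∫ s in Ioi (0 : ℝ), cexp (-t ^ 2) * cexp (I * (a - t) * s) := by
        simp_rw [hpole, integral_const_mul]
    _ = I * ∫ s in Ioi (0 : ℝ), ∫ t : ℝ, cexp (-t ^ 2) * cexp (I * (a - t) * s) := by
        rw [integral_integral_swap (integrable_cexp_neg_sq_mul_cexp_I_mul_prod ha)]
    _ = I * ∫ s in Ioi (0 : ℝ), √π * cexp (I * a * s - s ^ 2 / 4) := by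
        simp_rw [integral_cexp_neg_sq_mul_cexp_I_mul]
    _ = I * π * cexp (-a ^ 2) * erfc (-I * a) := by
        rw [integral_const_mul, integral_Ioi_cexp_I_mul_sub_sq_div_four]
        linear_combination I * cexp (-a ^ 2) * erfc (-I * a) * hpi
end

section
/- Let B : ℝ → ℂ be continuous with Taylor-type expansion B(s) = Σ_{k=0}^{2N-1} b_k s^k + R(s) where |R(s)| ≤ C|s|^{2N} for all s ∈ ℝ, and suppose B is bounded. Then for x > 0, ∫_{-∞}^{∞} e^{-xs²} B(s) ds = Σ_{k=0}^{N-1} b_{2k}·Γ((2k+1)/2)·x^{-(2k+1)/2} + E(x) with |E(x)| ≤ C·Γ((2N+1)/2)·x^{-(2N+1)/2}. -/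
/-!
Split `B` into its Taylor polynomial and the remainder `R`. Against the even weight
`exp (-x s²)` the odd monomials integrate to zero, and the substitution `u = s²` turns the even
ones into Gamma integrals. The remainder contributes at most `C` times the absolute moment
`∫ |s|^(2N) exp (-x s²) = Γ((2N+1)/2) x^(-(2N+1)/2)`.
-/

open MeasureTheory Finset

theorem Finset.sum_range_two_mul {M : Type*} [AddCommMonoid M] (f : ℕ → M) (n : ℕ) :
    ∑ k ∈ range (2 * n), f k = ∑ k ∈ range n, (f (2 * k) + f (2 * k + 1)) := by
  induction n with
  | zero => simp
  | succ n ih =>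
    rw [show 2 * (n + 1) = 2 * n + 1 + 1 by ring, sum_range_succ, sum_range_succ, ih,
      sum_range_succ, add_assoc]

theorem Function.Odd.integral_eq_zero {G E : Type*} [MeasurableSpace G] [AddGroup G]
    [MeasurableNeg G] [NormedAddCommGroup E] [NormedSpace ℝ E] {f : G → E} (hf : f.Odd)
    (μ : Measure G) [μ.IsNegInvariant] : ∫ x, f x ∂μ = 0 := by
  have : IsAddTorsionFree E := .of_isTorsionFree ℝ E
  rw [← self_eq_neg, ← integral_neg, ← integral_neg_eq_self f μ]
  simp_rw [hf.eq]

open Real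

section Gaussian

variable {x : ℝ}

theorem integrable_pow_mul_exp_neg_mul_sq (hx : 0 < x) (m : ℕ) :
    Integrable fun s : ℝ ↦ s ^ m * exp (-x * s ^ 2) := by
  simpa only [rpow_natCast] using
    integrable_rpow_mul_exp_neg_mul_sq hx (s := m) (by linarith [m.cast_nonneg (α := ℝ)])

theorem integral_abs_pow_mul_exp_neg_mul_sq (hx : 0 < x) (m : ℕ) :
    ∫ s : ℝ, |s| ^ m * exp (-x * s ^ 2) = Gamma ((m + 1) / 2) * x ^ (-(m + 1 : ℝ) / 2) := by
  have hm : (-1 : ℝ) < m := by linarith [m.cast_nonneg (α := ℝ)]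
  calc ∫ s : ℝ, |s| ^ m * exp (-x * s ^ 2)
      = 2 * ∫ s in Set.Ioi (0 : ℝ), s ^ (m : ℝ) * exp (-x * s ^ (2 : ℝ)) := by
        simp_rw [rpow_natCast, rpow_two]
        convert integral_comp_abs (f := fun s ↦ s ^ m * exp (-x * s ^ 2)) using 4 with s
        rw [sq_abs]
    _ = Gamma ((m + 1) / 2) * x ^ (-(m + 1 : ℝ) / 2) := by
        rw [integral_rpow_mul_exp_neg_mul_rpow two_pos hm hx]
        ring

theorem integral_pow_two_mul_mul_exp_neg_mul_sq (hx : 0 < x) (k : ℕ) :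
    ∫ s : ℝ, s ^ (2 * k) * exp (-x * s ^ 2)
      = Gamma ((2 * k + 1) / 2) * x ^ (-(2 * (k : ℝ) + 1) / 2) := by
  have h := integral_abs_pow_mul_exp_neg_mul_sq hx (2 * k)
  simp_rw [(even_two_mul k).pow_abs] at h
  rw [h]
  push_cast
  ring_nf

theorem integral_pow_two_mul_add_one_mul_exp_neg_mul_sq (x : ℝ) (k : ℕ) :
    ∫ s : ℝ, s ^ (2 * k + 1) * exp (-x * s ^ 2) = 0 :=
  Function.Odd.integral_eq_zero (fun s ↦ by simp [(odd_two_mul_add_one k).neg_pow]) _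

theorem integrable_abs_pow_mul_exp_neg_mul_sq (hx : 0 < x) (m : ℕ) :
    Integrable fun s : ℝ ↦ |s| ^ m * exp (-x * s ^ 2) := by
  simpa only [abs_mul, abs_pow, abs_exp] using (integrable_pow_mul_exp_neg_mul_sq hx m).abs

theorem integrable_mul_ofReal_pow_mul_exp_neg_mul_sq (hx : 0 < x) (c : ℂ) (k : ℕ) :
    Integrable fun s : ℝ ↦ c * ((s ^ k * exp (-x * s ^ 2) : ℝ) : ℂ) :=
  (integrable_pow_mul_exp_neg_mul_sq hx k).ofReal.const_mul c

theorem exp_neg_mul_sq_smul_sum_pow (x s : ℝ) (b : ℕ → ℂ) (n : ℕ) :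
    exp (-x * s ^ 2) • ∑ k ∈ range n, b k * (s : ℂ) ^ k
      = ∑ k ∈ range n, b k * ((s ^ k * exp (-x * s ^ 2) : ℝ) : ℂ) := by
  rw [smul_sum]
  refine sum_congr rfl fun k _ ↦ ?_
  push_cast [Complex.real_smul]
  ring

theorem integrable_exp_neg_mul_sq_smul_sum_pow (hx : 0 < x) (b : ℕ → ℂ) (n : ℕ) :
    Integrable fun s : ℝ ↦ exp (-x * s ^ 2) • ∑ k ∈ range n, b k * (s : ℂ) ^ k := by
  simp_rw [exp_neg_mul_sq_smul_sum_pow]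
  exact integrable_finsetSum _ fun k _ ↦ integrable_mul_ofReal_pow_mul_exp_neg_mul_sq hx (b k) k

theorem integral_exp_neg_mul_sq_smul_sum_pow (hx : 0 < x) (b : ℕ → ℂ) (N : ℕ) :
    ∫ s : ℝ, exp (-x * s ^ 2) • ∑ k ∈ range (2 * N), b k * (s : ℂ) ^ k
      = ∑ k ∈ range N,
          b (2 * k) * (Gamma ((2 * k + 1) / 2) : ℂ) * ((x ^ (-(2 * (k : ℝ) + 1) / 2) : ℝ) : ℂ) := by
  simp_rw [exp_neg_mul_sq_smul_sum_pow]
  rw [integral_finsetSum _ fun k _ ↦ integrable_mul_ofReal_pow_mul_exp_neg_mul_sq hx (b k) k,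
    sum_range_two_mul]
  refine sum_congr rfl fun k _ ↦ ?_
  rw [integral_const_mul, integral_const_mul, integral_complex_ofReal, integral_complex_ofReal,
    integral_pow_two_mul_mul_exp_neg_mul_sq hx, integral_pow_two_mul_add_one_mul_exp_neg_mul_sq]
  push_cast
  ring

variable {E : Type*} [NormedAddCommGroup E] [NormedSpace ℝ E] {R : ℝ → E} {C : ℝ} {m : ℕ}

theorem norm_exp_neg_mul_sq_smul_le (hR : ∀ s, ‖R s‖ ≤ C * |s| ^ m) (s : ℝ) :
    ‖exp (-x * s ^ 2) • R s‖ ≤ C * (|s| ^ m * exp (-x * s ^ 2)) := by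
  rw [norm_smul, norm_of_nonneg (exp_pos _).le]
  nlinarith [hR s, exp_pos (-x * s ^ 2)]

theorem integrable_exp_neg_mul_sq_smul_of_norm_le (hx : 0 < x) (hRm : AEStronglyMeasurable R)
    (hR : ∀ s, ‖R s‖ ≤ C * |s| ^ m) :
    Integrable fun s ↦ exp (-x * s ^ 2) • R s :=
  ((integrable_abs_pow_mul_exp_neg_mul_sq hx m).const_mul C).mono'
    ((by fun_prop : Continuous fun s : ℝ ↦ exp (-x * s ^ 2)).aestronglyMeasurable.smul hRm)
    (ae_of_all _ (norm_exp_neg_mul_sq_smul_le hR))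

theorem norm_integral_exp_neg_mul_sq_smul_le (hx : 0 < x) (hR : ∀ s, ‖R s‖ ≤ C * |s| ^ m) :
    ‖∫ s, exp (-x * s ^ 2) • R s‖ ≤ C * Gamma ((m + 1) / 2) * x ^ (-(m + 1 : ℝ) / 2) :=
  calc ‖∫ s, exp (-x * s ^ 2) • R s‖
      ≤ ∫ s, C * (|s| ^ m * exp (-x * s ^ 2)) :=
        norm_integral_le_of_norm_le ((integrable_abs_pow_mul_exp_neg_mul_sq hx m).const_mul C)
          (ae_of_all _ (norm_exp_neg_mul_sq_smul_le hR))
    _ = C * Gamma ((m + 1) / 2) * x ^ (-(m + 1 : ℝ) / 2) := by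
        rw [integral_const_mul, integral_abs_pow_mul_exp_neg_mul_sq hx, mul_assoc]

end Gaussian

theorem gaussian_expansion_general (B : ℝ → ℂ) (hcont : Continuous B)
    (b : ℕ → ℂ) (R : ℝ → ℂ) (N : ℕ) (C : ℝ)
    (hexp : ∀ s : ℝ, B s = (∑ k ∈ Finset.range (2 * N), b k * (s : ℂ) ^ k) + R s)
    (hR : ∀ s : ℝ, ‖R s‖ ≤ C * |s| ^ (2 * N))
    (x : ℝ) (hx : 0 < x) :
    ‖(∫ s : ℝ, Real.exp (-x * s ^ 2) • B s) -
        ∑ k ∈ Finset.range N,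
          b (2 * k) * (Real.Gamma ((2 * k + 1) / 2) : ℂ) *
            ((x ^ (-(2 * (k : ℝ) + 1) / 2) : ℝ) : ℂ)‖ ≤
      C * Real.Gamma ((2 * N + 1) / 2) * x ^ (-(2 * (N : ℝ) + 1) / 2) := by
  have hR_eq : R = fun s ↦ B s - ∑ k ∈ range (2 * N), b k * (s : ℂ) ^ k := by
    funext s
    rw [hexp s, add_sub_cancel_left]
  have hRm : AEStronglyMeasurable R := by
    rw [hR_eq]
    exact (hcont.sub (by fun_prop)).aestronglyMeasurable
  have hsplit : ∫ s : ℝ, exp (-x * s ^ 2) • B s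
      = (∫ s : ℝ, exp (-x * s ^ 2) • ∑ k ∈ range (2 * N), b k * (s : ℂ) ^ k)
        + ∫ s : ℝ, exp (-x * s ^ 2) • R s := by
    simp_rw [hexp, smul_add]
    exact integral_add (integrable_exp_neg_mul_sq_smul_sum_pow hx b (2 * N))
      (integrable_exp_neg_mul_sq_smul_of_norm_le hx hRm hR)
  rw [hsplit, integral_exp_neg_mul_sq_smul_sum_pow hx, add_sub_cancel_left]
  convert norm_integral_exp_neg_mul_sq_smul_le hx hR using 3 <;> push_cast <;> ring

/-- If the bounded continuous function `B` has the Taylor-type expansion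
`B(s) = Σ_{k<2N} b_k s^k + R(s)` with `|R(s)| ≤ C|s|^{2N}`, then for `x > 0` the
Gaussian integral of `B` equals `Σ_{k<N} b_{2k} Γ((2k+1)/2) x^{-(2k+1)/2}` up to
an error of size at most `C Γ((2N+1)/2) x^{-(2N+1)/2}`. -/
theorem gaussian_expansion (B : ℝ → ℂ) (hcont : Continuous B)
    (hbdd : ∃ M : ℝ, ∀ s : ℝ, ‖B s‖ ≤ M)
    (b : ℕ → ℂ) (R : ℝ → ℂ) (N : ℕ) (C : ℝ)
    (hexp : ∀ s : ℝ, B s = (∑ k ∈ Finset.range (2 * N), b k * (s : ℂ) ^ k) + R s)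
    (hR : ∀ s : ℝ, ‖R s‖ ≤ C * |s| ^ (2 * N))
    (x : ℝ) (hx : 0 < x) :
    ‖(∫ s : ℝ, Real.exp (-x * s ^ 2) • B s) -
        ∑ k ∈ Finset.range N,
          b (2 * k) * (Real.Gamma ((2 * k + 1) / 2) : ℂ) *
            ((x ^ (-(2 * (k : ℝ) + 1) / 2) : ℝ) : ℂ)‖ ≤
      C * Real.Gamma ((2 * N + 1) / 2) * x ^ (-(2 * (N : ℝ) + 1) / 2) :=
  gaussian_expansion_general B hcont b R N C hexp hR x hx
end
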